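/- arXiv:1901.08057 — 3 statements merged into one kernel-verified Lean document; each statement's English description precedes it below -/
import Mathlib

section
/- For the DWD loss with q = 1, given by V(u) = 1-u for u ≤ 1/2 and V(u) = 1/(4u) for u > 1/2, and any b > 0: if a ≤ 1/2 - b then the proximal map ψ(a,b) = argmin_u { V(u) + (u-a)²/(2b) } equals a + b; if a > 1/2 - b then ψ(a,b) is the unique real solution u > 1/2 of the cubic equation 4u³ - 4au² - b = 0. -/
/-!
The loss `V` lies above its tangent line `1 - u` at `1/2` and coincides with it on `u ≤ 1/2`.
Hence, when `a + b ≤ 1/2`, the objective exceeds its value at `a + b` by at least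
`(u - a - b)² / (2b)`. When `a + b > 1/2`, the objective is decreasing on `(-∞, 1/2]` and has
negative right derivative `(1/2 - a - b)/b` at `1/2`, so the minimizer lies in `(1/2, ∞)`; there
the objective is smooth, and Fermat's rule gives `-1/(4u²) + (u - a)/b = 0`, i.e. the cubic.
The cubic `4u²(u - a) = b` has only one positive root, since `u²(u - a)` is increasing where it
is positive.
-/

open Set Filter Topology

theorem HasDerivWithinAt.exists_gt_lt_of_neg {f : ℝ → ℝ} {f' x : ℝ}
    (hf : HasDerivWithinAt f f' (Ici x) x) (hf' : f' < 0) : ∃ y, x < y ∧ f y < f x := by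
  have hslope : ∀ᶠ y in 𝓝[>] x, slope f x y < 0 :=
    (hf.mono Ioi_subset_Ici_self).limsup_slope_le' (lt_irrefl x) hf'
  obtain ⟨y, hy, hxy : x < y⟩ := (hslope.and self_mem_nhdsWithin).exists
  rw [slope_def_field, div_lt_iff₀ (sub_pos.mpr hxy), zero_mul, sub_neg] at hy
  exact ⟨y, hxy, hy⟩

noncomputable section

namespace DWD

def loss (u : ℝ) : ℝ := if u ≤ 1 / 2 then 1 - u else 1 / (4 * u)

def proxObjective (a b u : ℝ) : ℝ := loss u + (u - a) ^ 2 / (2 * b)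

variable {a b u : ℝ}

theorem loss_of_le (hu : u ≤ 1 / 2) : loss u = 1 - u := if_pos hu

theorem loss_of_gt (hu : 1 / 2 < u) : loss u = 1 / (4 * u) := if_neg (not_le.mpr hu)

theorem one_sub_le_loss (u : ℝ) : 1 - u ≤ loss u := by
  rcases le_or_gt u (1 / 2) with hu | hu
  · rw [loss_of_le hu]
  · rw [loss_of_gt hu, le_div_iff₀ (by linarith)]
    nlinarith [sq_nonneg (2 * u - 1)]

theorem proxObjective_add_sq_le (hb : 0 < b) (hab : a + b ≤ 1 / 2) (u : ℝ) :
    proxObjective a b (a + b) + (u - (a + b)) ^ 2 / (2 * b) ≤ proxObjective a b u := by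
  have hlower : proxObjective a b (a + b) + (u - (a + b)) ^ 2 / (2 * b)
      = 1 - u + (u - a) ^ 2 / (2 * b) := by
    rw [proxObjective, loss_of_le hab]
    field_simp
    ring
  rw [hlower, proxObjective]
  gcongr
  exact one_sub_le_loss u

theorem proxObjective_half_le (hb : 0 < b) (hab : 1 / 2 ≤ a + b) (hu : u ≤ 1 / 2) :
    proxObjective a b (1 / 2) ≤ proxObjective a b u := by
  have hdiff : proxObjective a b u - proxObjective a b (1 / 2)
      = (1 / 2 - u) * (2 * (a + b) - u - 1 / 2) / (2 * b) := by
    rw [proxObjective, proxObjective, loss_of_le hu, loss_of_le le_rfl]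
    field_simp
    ring
  have : 0 ≤ (1 / 2 - u) * (2 * (a + b) - u - 1 / 2) / (2 * b) := by
    apply div_nonneg (mul_nonneg _ _) <;> linarith
  linarith

theorem proxObjective_eqOn_Ici :
    EqOn (proxObjective a b) (fun u ↦ 1 / (4 * u) + (u - a) ^ 2 / (2 * b)) (Ici (1 / 2)) := by
  intro u hu
  rcases (mem_Ici.mp hu).lt_or_eq with hu | rfl
  · rw [proxObjective, loss_of_gt hu]
  · rw [proxObjective, loss_of_le le_rfl]
    norm_num

theorem hasDerivWithinAt_proxObjective (hu : 1 / 2 ≤ u) :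
    HasDerivWithinAt (proxObjective a b) (-1 / (4 * u ^ 2) + (u - a) / b) (Ici (1 / 2)) u := by
  have hu0 : u ≠ 0 := by positivity
  have hrecip : HasDerivAt (fun u : ℝ ↦ 1 / (4 * u)) (-1 / (4 * u ^ 2)) u := by
    have hfun : (fun v : ℝ ↦ 1 / (4 * v)) = fun v ↦ 1 / 4 * v⁻¹ := by
      ext v
      ring
    rw [hfun]
    exact ((hasDerivAt_inv hu0).const_mul _).congr_deriv (by ring)
  have hsq : HasDerivAt (fun u ↦ (u - a) ^ 2 / (2 * b)) ((u - a) / b) u := by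
    refine ((((hasDerivAt_id u).sub_const a).pow 2).div_const (2 * b)).congr_deriv ?_
    field_simp
    simp
  exact (hrecip.add hsq).hasDerivWithinAt.congr proxObjective_eqOn_Ici (proxObjective_eqOn_Ici hu)

variable {ψ : ℝ}

theorem eq_add_of_isMinOn (hb : 0 < b) (hab : a + b ≤ 1 / 2)
    (hψ : IsMinOn (proxObjective a b) univ ψ) : ψ = a + b := by
  have hsq : (ψ - (a + b)) ^ 2 / (2 * b) ≤ 0 := by
    linarith [proxObjective_add_sq_le hb hab ψ, isMinOn_univ_iff.mp hψ (a + b)]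
  have : (ψ - (a + b)) ^ 2 ≤ 0 := by
    simpa using (div_le_iff₀ (by positivity : (0 : ℝ) < 2 * b)).mp hsq
  linarith [pow_eq_zero_iff two_ne_zero |>.mp (le_antisymm this (sq_nonneg _))]

theorem half_lt_of_isMinOn (hb : 0 < b) (hab : 1 / 2 < a + b)
    (hψ : IsMinOn (proxObjective a b) univ ψ) : 1 / 2 < ψ := by
  have hslope : -1 / (4 * (1 / 2 : ℝ) ^ 2) + (1 / 2 - a) / b < 0 := by
    have : (1 / 2 - a) / b < 1 := (div_lt_one hb).mpr (by linarith)
    norm_num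
    linarith
  obtain ⟨u, -, hu⟩ := (hasDerivWithinAt_proxObjective le_rfl).exists_gt_lt_of_neg hslope
  by_contra! hψ_le
  linarith [isMinOn_univ_iff.mp hψ u, proxObjective_half_le hb hab.le hψ_le]

theorem cubic_eq_zero_of_isMinOn (hb : 0 < b) (hψ_half : 1 / 2 < ψ)
    (hψ : IsMinOn (proxObjective a b) univ ψ) :
    4 * ψ ^ 3 - 4 * a * ψ ^ 2 - b = 0 := by
  have hfermat := (hψ.isLocalMin univ_mem).hasDerivAt_eq_zero
    ((hasDerivWithinAt_proxObjective hψ_half.le).hasDerivAt (Ici_mem_nhds hψ_half))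
  have hψ0 : ψ ≠ 0 := by positivity
  field_simp at hfermat
  linear_combination hfermat

theorem eq_of_cubic_eq_zero (hb : 0 < b) {v : ℝ} (hu : 0 < u) (hv : 0 < v)
    (hu_root : 4 * u ^ 3 - 4 * a * u ^ 2 - b = 0) (hv_root : 4 * v ^ 3 - 4 * a * v ^ 2 - b = 0) :
    u = v := by
  have hua : a < u := by nlinarith [mul_pos (mul_pos hu hu) hb]
  have hva : a < v := by nlinarith [mul_pos (mul_pos hv hv) hb]
  have hfactor : (u - v) * (u * (u - a) + v * (v - a) + u * v) = 0 := by
    linear_combination (hu_root - hv_root) / 4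
  have hpos : 0 < u * (u - a) + v * (v - a) + u * v := by
    have := mul_pos hu (sub_pos.mpr hua)
    have := mul_pos hv (sub_pos.mpr hva)
    have := mul_pos hu hv
    linarith
  linarith [(mul_eq_zero.mp hfactor).resolve_right hpos.ne']

end DWD

end

/-- For the DWD loss with `q = 1`, `V u = 1 - u` for `u ≤ 1/2` and `V u = 1/(4u)` for
`u > 1/2`, and any `b > 0`: if `a ≤ 1/2 - b` then the minimizer `ψ` of
`u ↦ V u + (u-a)^2/(2b)` equals `a + b`; if `a > 1/2 - b` then `ψ` is the unique real
solution `u > 1/2` of the cubic `4u³ - 4au² - b = 0`. -/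
theorem stmt_2 (a b : ℝ) (hb : 0 < b) (ψ : ℝ)
    (hψ : ∀ u : ℝ,
      (if ψ ≤ 1 / 2 then 1 - ψ else 1 / (4 * ψ)) + (ψ - a) ^ 2 / (2 * b) ≤
      (if u ≤ 1 / 2 then 1 - u else 1 / (4 * u)) + (u - a) ^ 2 / (2 * b)) :
    (a ≤ 1 / 2 - b → ψ = a + b) ∧
    (1 / 2 - b < a →
      1 / 2 < ψ ∧ 4 * ψ ^ 3 - 4 * a * ψ ^ 2 - b = 0 ∧
      ∀ u : ℝ, 1 / 2 < u → 4 * u ^ 3 - 4 * a * u ^ 2 - b = 0 → u = ψ) := by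
  have hmin : IsMinOn (DWD.proxObjective a b) univ ψ := isMinOn_univ_iff.mpr hψ
  refine ⟨fun hab ↦ DWD.eq_add_of_isMinOn hb (by linarith) hmin, fun hab ↦ ?_⟩
  have hψ_half := DWD.half_lt_of_isMinOn hb (by linarith) hmin
  have hψ_root := DWD.cubic_eq_zero_of_isMinOn hb hψ_half hmin
  exact ⟨hψ_half, hψ_root, fun u hu hu_root ↦
    DWD.eq_of_cubic_eq_zero hb (by linarith) (by linarith) hu_root hψ_root⟩
end

section
/- Let z ~ N(0,1), b > 0, and let ψ(a,b) be the hinge-loss proximal map. Define f₁(m) = E[ψ(m + z, b) - m - z]. Then f₁(m) = b·Φ(1 - b - m) + ∫_{1-b-m}^{1-m} (1 - m - z)·φ(z) dz, where φ and Φ are the standard normal pdf and cdf; in particular f₁ is nonnegative, continuous, and nonincreasing in m. -/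
/-!
The hinge prox is explicit: `ψ(a, b) = a + min b (max (1 - a) 0)`, because the objective is
`1/b`-strongly convex and this point is critical. So `f₁ m = E[s(m + z)]` for the clipped ramp
`s x = min b (max (1 - x) 0)`, which is continuous, nonincreasing and takes values in `[0, b]`:
splitting at `1 - b - m` and `1 - m` gives the formula, dominated convergence gives continuity,
and monotonicity of the integral gives antitonicity.
-/

open MeasureTheory ProbabilityTheory Set

noncomputable def hingeObjective (b a u : ℝ) : ℝ := max (1 - u) 0 + (u - a) ^ 2 / (2 * b)

def hingeProxStep (b x : ℝ) : ℝ := min b (max (1 - x) 0)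

section HingeProx

variable {b : ℝ}

lemma hingeObjective_add_sq_le (hb : 0 < b) (a u : ℝ) :
    hingeObjective b a (a + hingeProxStep b a) + (u - (a + hingeProxStep b a)) ^ 2 / (2 * b) ≤
      hingeObjective b a u := by
  unfold hingeObjective hingeProxStep
  have hmax₁ : 1 - u ≤ max (1 - u) 0 := le_max_left _ _
  have hmax₀ : 0 ≤ max (1 - u) 0 := le_max_right _ _
  rcases le_or_gt b (1 - a) with h₁ | h₁
  · rw [min_eq_left (le_max_of_le_left h₁), max_eq_left (by linarith : 0 ≤ 1 - (a + b))]
    have : (a + b - a) ^ 2 / (2 * b) + (u - (a + b)) ^ 2 / (2 * b) =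
        (u - a) ^ 2 / (2 * b) - (u - (a + b)) := by
      field_simp; ring
    linarith
  rcases le_or_gt 0 (1 - a) with h₂ | h₂
  · rw [max_eq_left h₂, min_eq_right h₁.le, add_sub_cancel, sub_self, max_self, zero_add]
    have : (1 - a) ^ 2 / (2 * b) + (u - 1) ^ 2 / (2 * b) =
        (u - a) ^ 2 / (2 * b) + (1 - u) * (1 - a) / b := by
      field_simp; ring
    have : (1 - u) * (1 - a) / b ≤ max (1 - u) 0 := by
      rw [div_le_iff₀ hb]
      rcases le_or_gt u 1 with hu | hu <;> nlinarith
    linarith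
  · rw [max_eq_right h₂.le, min_eq_right hb.le, add_zero, max_eq_right h₂.le, sub_self]
    have : (0 : ℝ) ^ 2 / (2 * b) = 0 := by simp
    linarith

lemma eq_add_hingeProxStep_of_forall_le (hb : 0 < b) {a x : ℝ}
    (hx : ∀ u, hingeObjective b a x ≤ hingeObjective b a u) :
    x = a + hingeProxStep b a := by
  set c := a + hingeProxStep b a
  have hsq : (x - c) ^ 2 / (2 * b) ≤ 0 := by linarith [hingeObjective_add_sq_le hb a x, hx c]
  rw [div_le_iff₀ (by positivity), zero_mul] at hsq
  exact sub_eq_zero.mp (pow_eq_zero_iff two_ne_zero |>.mp (le_antisymm hsq (sq_nonneg _)))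

end HingeProx

section HingeProxStep

variable {b : ℝ}

lemma hingeProxStep_nonneg (hb : 0 ≤ b) (x : ℝ) : 0 ≤ hingeProxStep b x :=
  le_min hb (le_max_right _ _)

lemma hingeProxStep_le (x : ℝ) : hingeProxStep b x ≤ b := min_le_left _ _

lemma abs_hingeProxStep_le (hb : 0 ≤ b) (x : ℝ) : |hingeProxStep b x| ≤ b :=
  abs_le.mpr ⟨by linarith [hingeProxStep_nonneg hb x], hingeProxStep_le x⟩

lemma continuous_hingeProxStep : Continuous (hingeProxStep b) := by
  unfold hingeProxStep; fun_prop

lemma antitone_hingeProxStep : Antitone (hingeProxStep b) := fun _ _ hxy =>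
  min_le_min_left b (max_le_max_right 0 (sub_le_sub_left hxy 1))

lemma hingeProxStep_add_eq_indicator (hb : 0 ≤ b) (m z : ℝ) :
    hingeProxStep b (m + z) = (Iio (1 - b - m)).indicator (fun _ => b) z +
      (Icc (1 - b - m) (1 - m)).indicator (fun z => 1 - m - z) z := by
  unfold hingeProxStep
  rcases lt_or_ge z (1 - b - m) with h₁ | h₁
  · rw [indicator_of_mem (mem_Iio.mpr h₁),
      indicator_of_notMem fun h => (h.1.trans_lt h₁).false,
      min_eq_left (le_max_of_le_left (by linarith)), add_zero]
  rw [indicator_of_notMem (notMem_Iio.mpr h₁), zero_add]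
  rcases le_or_gt z (1 - m) with h₂ | h₂
  · rw [indicator_of_mem (mem_Icc.mpr ⟨h₁, h₂⟩), max_eq_left (by linarith),
      min_eq_right (by linarith)]
    ring
  · rw [indicator_of_notMem fun h => (h.2.trans_lt h₂).false, max_eq_right (by linarith),
      min_eq_right hb]

end HingeProxStep

section Translate

variable {μ : Measure ℝ} [IsFiniteMeasure μ] {g : ℝ → ℝ} {C : ℝ}

lemma integrable_comp_const_add (hg : Continuous g) (hC : ∀ x, |g x| ≤ C) (m : ℝ) :
    Integrable (fun z => g (m + z)) μ :=
  .of_bound (by fun_prop : Continuous fun z => g (m + z)).aestronglyMeasurable C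
    (.of_forall fun z => hC (m + z))

lemma continuous_integral_comp_add (hg : Continuous g) (hC : ∀ x, |g x| ≤ C) :
    Continuous fun m => ∫ z, g (m + z) ∂μ :=
  continuous_of_dominated (bound := fun _ => C)
    (fun m => (by fun_prop : Continuous fun z => g (m + z)).aestronglyMeasurable)
    (fun m => .of_forall fun z => hC (m + z)) (integrable_const C)
    (.of_forall fun z => by fun_prop)

lemma antitone_integral_comp_add (hg : Continuous g) (hC : ∀ x, |g x| ≤ C) (hg' : Antitone g) :
    Antitone fun m => ∫ z, g (m + z) ∂μ := fun _ _ hm =>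
  integral_mono (integrable_comp_const_add hg hC _) (integrable_comp_const_add hg hC _)
    fun z => hg' (add_le_add_left hm z)

end Translate

lemma integral_hingeProxStep_add {μ : Measure ℝ} [IsFiniteMeasure μ] [NullSingletonClass μ]
    {b : ℝ} (hb : 0 ≤ b) (m : ℝ) :
    ∫ z, hingeProxStep b (m + z) ∂μ =
      b * (μ (Iic (1 - b - m))).toReal + ∫ z in Icc (1 - b - m) (1 - m), (1 - m - z) ∂μ := by
  have hIcc : IntegrableOn (fun z => 1 - m - z) (Icc (1 - b - m) (1 - m)) μ :=
    (by fun_prop : Continuous fun z : ℝ => 1 - m - z).integrableOn_Icc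
  simp_rw [hingeProxStep_add_eq_indicator hb m]
  rw [integral_add ((integrable_const b).indicator measurableSet_Iio)
      (hIcc.integrable_indicator measurableSet_Icc),
    integral_indicator measurableSet_Iio, integral_indicator measurableSet_Icc, setIntegral_const,
    measureReal_def, measure_congr Iio_ae_eq_Iic, smul_eq_mul, mul_comm]

/-- For `z ~ N(0,1)`, `b > 0` and the hinge-loss proximal map `ψ`, the function
`f₁ m = E[ψ(m + z) - m - z]` satisfies
`f₁ m = b Φ(1-b-m) + ∫_{1-b-m}^{1-m} (1-m-z) φ(z) dz`; it is nonnegative, continuous,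
and nonincreasing in `m`. -/
theorem stmt_12 (b : ℝ) (hb : 0 < b) (ψ : ℝ → ℝ)
    (hψ : ∀ a u : ℝ, max (1 - ψ a) 0 + (ψ a - a) ^ 2 / (2 * b) ≤
      max (1 - u) 0 + (u - a) ^ 2 / (2 * b))
    (f₁ : ℝ → ℝ)
    (hf₁ : ∀ m : ℝ, f₁ m = ∫ z, (ψ (m + z) - m - z) ∂(gaussianReal 0 1)) :
    (∀ m : ℝ, f₁ m =
      b * (gaussianReal 0 1 (Set.Iic (1 - b - m))).toReal +
        ∫ z in Set.Icc (1 - b - m) (1 - m), (1 - m - z) ∂(gaussianReal 0 1)) ∧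
    (∀ m, 0 ≤ f₁ m) ∧ Continuous f₁ ∧ Antitone f₁ := by
  have : NullSingletonClass (gaussianReal 0 1) :=
    ⟨fun x => gaussianReal_absolutelyContinuous 0 one_ne_zero (measure_singleton x)⟩
  obtain rfl : f₁ = fun m => ∫ z, hingeProxStep b (m + z) ∂gaussianReal 0 1 := by
    funext m
    rw [hf₁]
    congr with z
    rw [eq_add_hingeProxStep_of_forall_le hb (hψ (m + z))]
    ring
  exact ⟨integral_hingeProxStep_add hb.le,
    fun m => integral_nonneg fun z => hingeProxStep_nonneg hb.le _,
    continuous_integral_comp_add continuous_hingeProxStep (abs_hingeProxStep_le hb.le),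
    antitone_integral_comp_add continuous_hingeProxStep (abs_hingeProxStep_le hb.le)
      antitone_hingeProxStep⟩
end

section
/- Let V: ℝ → ℝ be convex, differentiable, nonincreasing, with V(u) + u → 0 as u → -∞ and V(u) → 0 as u → ∞, and let ψ(a,b) be its proximal map for b > 0. Then ψ(a,b) - a → b as a → -∞ and ψ(a,b) - a → 0 as a → +∞. -/
/-!
Testing the minimality of `ψ a` against `u = a` gives `(ψ a - a)² ≤ 2b V(a)`, since `V ≥ 0`.
Testing it against `u = a + b` and using `V(u) + u ≥ 0` gives
`(ψ a - a - b)² ≤ 2b (V(a + b) + a + b)`. Both bounds tend to `0` at the relevant end.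
The two lower bounds come from monotonicity: `V` is nonincreasing with limit `0` at `+∞`, and
the convex function `V(u) + u` has a finite limit at `-∞`, which forces it to be nondecreasing.
-/

open Filter Topology

lemma ConvexOn.monotone_of_tendsto_atBot {g : ℝ → ℝ} (hg : ConvexOn ℝ Set.univ g) {L : ℝ}
    (hL : Tendsto g atBot (𝓝 L)) : Monotone g := by
  intro s x hsx
  rcases hsx.eq_or_lt with rfl | hsx
  · rfl
  have hslope : Tendsto (fun t => (g s - g t) / (s - t)) atBot (𝓝 0) :=
    (hL.const_sub (g s)).div_atTop (tendsto_atTop_add_const_left _ s tendsto_neg_atBot_atTop)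
  have hnonneg : 0 ≤ (g x - g s) / (x - s) := by
    refine le_of_tendsto hslope ?_
    filter_upwards [eventually_lt_atBot s] with t hts
    exact hg.slope_mono_adjacent trivial trivial hts hsx
  have := (le_div_iff₀ (sub_pos.mpr hsx)).mp hnonneg
  linarith

lemma tendsto_of_sq_sub_le {α : Type*} {l : Filter α} {f g : α → ℝ} {c : ℝ}
    (hg : Tendsto g l (𝓝 0)) (hfg : ∀ x, (f x - c) ^ 2 ≤ g x) : Tendsto f l (𝓝 c) := by
  rw [tendsto_iff_norm_sub_tendsto_zero]
  have hsqrt : Tendsto (fun x => √(g x)) l (𝓝 0) := by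
    simpa using hg.sqrt
  exact squeeze_zero (fun _ => norm_nonneg _) (fun x => Real.abs_le_sqrt (hfg x)) hsqrt

section Proximal

variable {V : ℝ → ℝ} {a b p : ℝ}

lemma prox_sub_sq_le (hb : 0 < b) (hVp : 0 ≤ V p)
    (hp : ∀ u, V p + (p - a) ^ 2 / (2 * b) ≤ V u + (u - a) ^ 2 / (2 * b)) :
    (p - a) ^ 2 ≤ 2 * b * V a := by
  have h := hp a
  rw [sub_self, zero_pow two_ne_zero, zero_div, add_zero] at h
  have : (p - a) ^ 2 / (2 * b) ≤ V a := by linarith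
  rwa [div_le_iff₀ (by positivity), mul_comm] at this

lemma prox_sub_sub_sq_le (hb : 0 < b) (hVp : 0 ≤ V p + p)
    (hp : ∀ u, V p + (p - a) ^ 2 / (2 * b) ≤ V u + (u - a) ^ 2 / (2 * b)) :
    (p - a - b) ^ 2 ≤ 2 * b * (V (a + b) + (a + b)) := by
  have h := hp (a + b)
  have hexpand : (p - a - b) ^ 2 / (2 * b) = (p - a) ^ 2 / (2 * b) - (p - a) + b / 2 := by
    field_simp; ring
  have hstep : (a + b - a) ^ 2 / (2 * b) = b / 2 := by
    field_simp; ring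
  have : (p - a - b) ^ 2 / (2 * b) ≤ V (a + b) + (a + b) := by linarith
  rwa [div_le_iff₀ (by positivity), mul_comm] at this

end Proximal

theorem stmt_17_general (V : ℝ → ℝ) (hV : ConvexOn ℝ Set.univ V)
    (hVanti : Antitone V)
    (hVbot : Filter.Tendsto (fun u => V u + u) Filter.atBot (nhds 0))
    (hVtop : Filter.Tendsto V Filter.atTop (nhds 0))
    (b : ℝ) (hb : 0 < b) (ψ : ℝ → ℝ)
    (hψ : ∀ a u : ℝ, V (ψ a) + (ψ a - a) ^ 2 / (2 * b) ≤ V u + (u - a) ^ 2 / (2 * b)) :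
    Filter.Tendsto (fun a => ψ a - a) Filter.atBot (nhds b) ∧
    Filter.Tendsto (fun a => ψ a - a) Filter.atTop (nhds 0) := by
  have hV_nonneg : ∀ u, 0 ≤ V u := hVanti.le_of_tendsto hVtop
  have hV_add_id_mono : Monotone fun u => V u + u :=
    (hV.add (convexOn_id convex_univ)).monotone_of_tendsto_atBot hVbot
  have hV_add_id_nonneg : ∀ u, 0 ≤ V u + u := hV_add_id_mono.le_of_tendsto hVbot
  constructor
  · have hbound : Tendsto (fun a => 2 * b * (V (a + b) + (a + b))) atBot (𝓝 0) := by
      simpa using (hVbot.comp (tendsto_atBot_add_const_right _ b tendsto_id)).const_mul (2 * b)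
    exact tendsto_of_sq_sub_le hbound fun a =>
      by simpa only [sub_sub] using prox_sub_sub_sq_le hb (hV_add_id_nonneg (ψ a)) (hψ a)
  · have hbound : Tendsto (fun a => 2 * b * V a) atTop (𝓝 0) := by
      simpa using hVtop.const_mul (2 * b)
    exact tendsto_of_sq_sub_le hbound fun a =>
      by simpa only [sub_zero] using prox_sub_sq_le hb (hV_nonneg (ψ a)) (hψ a)

/-- For a convex, differentiable, nonincreasing loss with `V(u) + u → 0` at `-∞` and
`V(u) → 0` at `+∞`, the proximal shift satisfies `ψ(a,b) - a → b` as `a → -∞` and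
`ψ(a,b) - a → 0` as `a → +∞`. -/
theorem stmt_17 (V : ℝ → ℝ) (hV : ConvexOn ℝ Set.univ V) (hVd : Differentiable ℝ V)
    (hVanti : Antitone V)
    (hVbot : Filter.Tendsto (fun u => V u + u) Filter.atBot (nhds 0))
    (hVtop : Filter.Tendsto V Filter.atTop (nhds 0))
    (b : ℝ) (hb : 0 < b) (ψ : ℝ → ℝ)
    (hψ : ∀ a u : ℝ, V (ψ a) + (ψ a - a) ^ 2 / (2 * b) ≤ V u + (u - a) ^ 2 / (2 * b)) :
    Filter.Tendsto (fun a => ψ a - a) Filter.atBot (nhds b) ∧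
    Filter.Tendsto (fun a => ψ a - a) Filter.atTop (nhds 0) :=
  stmt_17_general V hV hVanti hVbot hVtop b hb ψ hψ
end
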